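/- If m and l are both odd, then λ(K_{m,l}) ≥ max{ (m−1)/2, (l−1)/2 }, where K_{m,l} is the complete bipartite graph with vertex classes of sizes m and l. -/

import Mathlib

open SimpleGraph FirstOrder

namespace SymPaper

/-! ### The symmetry breaking-preserving game `Sym(G)`

Two players A and B alternately color previously uncolored edges of `G` (A red, B blue),
A moving first.  A strategy is a function of the opponent-visible history as in the paper:
A's move is a function of B's previous moves, B's move is a function of A's moves so far. -/

variable {V : Type*}

/-- `rounds S1 S2 n` is the list of pairs (A's edge, B's edge) of the first `n` rounds,
when A follows `S1` and B follows `S2`: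
`a i = S1 (b 1, …, b (i-1))` and `b i = S2 (a 1, …, a i)`. -/
def rounds (S1 S2 : List (Sym2 V) → Sym2 V) : ℕ → List (Sym2 V × Sym2 V)
  | 0 => []
  | n + 1 =>
    let prev := rounds S1 S2 n
    let a := S1 (prev.map Prod.snd)
    let b := S2 (prev.map Prod.fst ++ [a])
    prev ++ [(a, b)]

/-- The subgraph (of the ambient vertex set) formed by a list of edges. -/
def graphOf (L : List (Sym2 V)) : SimpleGraph V :=
  SimpleGraph.fromEdgeSet {e | e ∈ L}

/-- The red and the blue subgraphs are isomorphic after round `i`. -/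
def isoAt (S1 S2 : List (Sym2 V) → Sym2 V) (i : ℕ) : Prop :=
  Nonempty (graphOf ((rounds S1 S2 i).map Prod.fst) ≃g graphOf ((rounds S1 S2 i).map Prod.snd))

/-- A strategy for player A: a function mapping every sequence of pairwise distinct
edges to an edge different from them and from all of its own values on prefixes
(required whenever such a fresh edge exists, i.e. `2·i + 1 ≤ |E(G)|`). -/
structure AStrategy (G : SimpleGraph V) where
  move : List (Sym2 V) → Sym2 V
  valid : ∀ L : List (Sym2 V), L.Nodup → (∀ e ∈ L, e ∈ G.edgeSet) →
    2 * L.length + 1 ≤ G.edgeSet.ncard →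
    move L ∈ G.edgeSet ∧ move L ∉ L ∧
      ∀ L' : List (Sym2 V), L' <+: L → L' ≠ L → move L' ≠ move L

/-- A strategy for player B: defined analogously on nonempty sequences. -/
structure BStrategy (G : SimpleGraph V) where
  move : List (Sym2 V) → Sym2 V
  valid : ∀ L : List (Sym2 V), L ≠ [] → L.Nodup → (∀ e ∈ L, e ∈ G.edgeSet) →
    2 * L.length ≤ G.edgeSet.ncard →
    move L ∈ G.edgeSet ∧ move L ∉ L ∧
      ∀ L' : List (Sym2 V), L' ≠ [] → L' <+: L → L' ≠ L → move L' ≠ move L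

/-- `l(S1,S2)`: the maximum `l` (at most the total number `⌊|E(G)|/2⌋` of rounds)
such that the red and blue subgraphs are isomorphic after every round `i ≤ l`. -/
noncomputable def playLength (G : SimpleGraph V) (S1 S2 : List (Sym2 V) → Sym2 V) : ℕ :=
  sSup {l : ℕ | l ≤ G.edgeSet.ncard / 2 ∧ ∀ i ≤ l, isoAt S1 S2 i}

/-- `λ(G) = max_{S2} min_{S1} l(S1,S2)`, the length of the game `Sym(G)`. -/
noncomputable def symLen (G : SimpleGraph V) : ℕ :=
  ⨆ S2 : BStrategy G, ⨅ S1 : AStrategy G, playLength G S1.move S2.move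

/-- `λ̃(G) = min_{S1} max_{S2} l(S1,S2)`. -/
noncomputable def symLenTilde (G : SimpleGraph V) : ℕ :=
  ⨅ S1 : AStrategy G, ⨆ S2 : BStrategy G, playLength G S1.move S2.move

/-! ### The Ehrenfeucht–Fraïssé game `EF(G0,G1)`

Vertex-disjointness is modelled by taking two different vertex types.  In each round the
spoiler (player A) picks a vertex of either graph and the duplicator (player B) answers with
a vertex of the other graph, so each round produces a pair in `V0 × V1`. -/

variable {V0 V1 : Type*}

/-- A duplicator strategy: given the history of pairs and the spoiler's pick
(a vertex of `G0` or of `G1`), produce the pair for this round; the spoiler's pick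
must be the corresponding component of the pair. -/
structure DStrategy (V0 V1 : Type*) where
  resp : List (V0 × V1) → V0 ⊕ V1 → V0 × V1
  resp_left : ∀ L u, (resp L (Sum.inl u)).1 = u
  resp_right : ∀ L w, (resp L (Sum.inr w)).2 = w

/-- The list of pairs of vertices chosen in the first `n` rounds when the duplicator
follows `D` and the spoiler follows `σ`. -/
def efRounds (D : DStrategy V0 V1) (σ : List (V0 × V1) → V0 ⊕ V1) : ℕ → List (V0 × V1)
  | 0 => []
  | n + 1 =>
    let prev := efRounds D σ n
    prev ++ [D.resp prev (σ prev)]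

/-- The chosen pairs form a partial isomorphism between `G0` and `G1`, i.e.
an isomorphism between the subgraphs induced by the chosen vertices. -/
def PartialIso (G0 : SimpleGraph V0) (G1 : SimpleGraph V1) (L : List (V0 × V1)) : Prop :=
  ∀ p ∈ L, ∀ q ∈ L, (p.1 = q.1 ↔ p.2 = q.2) ∧ (G0.Adj p.1 q.1 ↔ G1.Adj p.2 q.2)

/-- The duplicator can survive `k` rounds of `EF(G0,G1)` whatever the spoiler does. -/
def DuplicatorWins (G0 : SimpleGraph V0) (G1 : SimpleGraph V1) (k : ℕ) : Prop :=
  ∃ D : DStrategy V0 V1, ∀ σ : List (V0 × V1) → V0 ⊕ V1, PartialIso G0 G1 (efRounds D σ k)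

/-- `l_EF(G0,G1)`: the maximum number of rounds during which the duplicator, playing
optimally, survives irrespective of the spoiler's strategy (possibly `⊤`). -/
noncomputable def lEF (G0 : SimpleGraph V0) (G1 : SimpleGraph V1) : ℕ∞ :=
  sSup {k : ℕ∞ | ∃ m : ℕ, DuplicatorWins G0 G1 m ∧ k = (m : ℕ∞)}

/-- The canonical embedding of `ℕ∞` into the extended reals. -/
noncomputable def enatToEReal : ℕ∞ → EReal
  | none => ⊤
  | some m => ((m : ℝ) : EReal)

/-! ### Line graphs, paths, cycles -/

/-- The line graph `L(G)`: vertices are the edges of `G`, two of them adjacent iff they are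
distinct and share a vertex of `G`. -/
def lineG (G : SimpleGraph V) : SimpleGraph G.edgeSet where
  Adj e f := e ≠ f ∧ ∃ v : V, v ∈ (e : Sym2 V) ∧ v ∈ (f : Sym2 V)
  symm := by
    constructor
    rintro e f ⟨hne, v, hv, hw⟩
    exact ⟨hne.symm, v, hw, hv⟩
  loopless := by
    constructor
    rintro e ⟨hne, -⟩
    exact hne rfl

/-- `P n`: the path with `n` edges (on `n+1` vertices). -/
abbrev pathG (n : ℕ) : SimpleGraph (Fin (n + 1)) := SimpleGraph.pathGraph (n + 1)

/-- `C n`: the cycle with `n` edges (on `n` vertices); meaningful for `n ≥ 3`. -/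
abbrev cycleG (n : ℕ) : SimpleGraph (Fin n) := SimpleGraph.cycleGraph n

/-! ### Counting quantifiers of first-order formulas -/

/-- The number of quantifier occurrences in a first-order formula. -/
def quantCount {L : Language} {α : Type*} : ∀ {n : ℕ}, L.BoundedFormula α n → ℕ
  | _, .falsum => 0
  | _, .equal _ _ => 0
  | _, .rel _ _ => 0
  | _, .imp f g => quantCount f + quantCount g
  | _, .all f => quantCount f + 1


/-! ### Auxiliary machinery for Statement 18 -/

set_option linter.unusedSectionVars false

section Core

variable {W : Type*} [Fintype W] [DecidableEq W] [Nonempty W]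

/-- A junk edge. -/
noncomputable def junkE : Sym2 W := s(Classical.arbitrary W, Classical.arbitrary W)

open Classical in
/-- Pick an edge of `G` not occurring in the list `C`, if one exists. -/
noncomputable def pickFresh (G : SimpleGraph W) (C : List (Sym2 W)) : Sym2 W :=
  if h : ∃ e, e ∈ G.edgeSet ∧ e ∉ C then h.choose else junkE

open Classical in
lemma pickFresh_spec {G : SimpleGraph W} {C : List (Sym2 W)}
    (h : C.length < G.edgeSet.ncard) :
    pickFresh G C ∈ G.edgeSet ∧ pickFresh G C ∉ C := by
  have hex : ∃ e, e ∈ G.edgeSet ∧ e ∉ C := by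
    by_contra hc
    push_neg at hc
    have hsub : G.edgeSet ⊆ ↑C.toFinset := fun e he => by
      simpa using hc e he
    have h1 := Set.ncard_le_ncard hsub (C.toFinset.finite_toSet)
    rw [Set.ncard_coe_finset] at h1
    have h2 : C.toFinset.card ≤ C.length := C.toFinset_card_le
    omega
  rw [pickFresh, dif_pos hex]
  exact hex.choose_spec

/-- Decompose an edge into its (true side, false side) pair of endpoints. -/
def unpack (p : W → Bool) : Sym2 W → Option (W × W) :=
  Sym2.lift ⟨fun u v =>
      if p u = true ∧ p v = false then some (u, v)
      else if p v = true ∧ p u = false then some (v, u) else none, by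
    intro u v
    rcases Bool.eq_false_or_eq_true (p u) with hu | hu <;>
      rcases Bool.eq_false_or_eq_true (p v) with hv | hv <;>
      simp [hu, hv]⟩

lemma unpack_mk (p : W → Bool) {u w : W} (hu : p u = true) (hw : p w = false) :
    unpack p s(u, w) = some (u, w) := by
  simp [unpack, hu, hw]

lemma unpack_eq_some {p : W → Bool} {e : Sym2 W} {u w : W}
    (h : unpack p e = some (u, w)) : p u = true ∧ p w = false ∧ e = s(u, w) := by
  induction e with
  | _ x y =>
    simp only [unpack, Sym2.lift_mk] at h
    split_ifs at h with h1 h2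
    · rcases h1 with ⟨hx, hy⟩
      cases h; exact ⟨hx, hy, rfl⟩
    · rcases h2 with ⟨hy, hx⟩
      cases h; exact ⟨hy, hx, Sym2.eq_swap⟩

end Core
section BMachine

variable {W : Type*} [Fintype W] [DecidableEq W] [Nonempty W]

/-- State of player B's pairing strategy. -/
structure BSt (W : Type*) where
  sig : W → W
  col : List (Sym2 W)
  blu : List (Sym2 W)

open Classical in
/-- B's candidate reply together with the updated pairing involution. -/
noncomputable def bcand (G : SimpleGraph W) (p : W → Bool) (st : BSt W) (a : Sym2 W) :
    Sym2 W × (W → W) :=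
  match unpack p a with
  | some (u, w) =>
    if st.sig u ≠ u then (s(st.sig u, w), st.sig)
    else if h : ∃ q, st.sig q = q ∧ q ≠ u ∧ p q = true then
      (s(h.choose, w),
        fun x => if x = u then h.choose else if x = h.choose then u else st.sig x)
    else (pickFresh G (st.col ++ [a]), st.sig)
  | none => (pickFresh G (st.col ++ [a]), st.sig)

/-- B's actual reply: the candidate if it is still uncolored, otherwise a fresh edge. -/
noncomputable def bchoice (G : SimpleGraph W) (p : W → Bool) (st : BSt W) (a : Sym2 W) :
    Sym2 W :=
  if (bcand G p st a).1 ∈ st.col ++ [a] then pickFresh G (st.col ++ [a])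
  else (bcand G p st a).1

noncomputable def bstep (G : SimpleGraph W) (p : W → Bool) (st : BSt W) (a : Sym2 W) :
    BSt W :=
  ⟨(bcand G p st a).2, st.col ++ [a, bchoice G p st a], st.blu ++ [bchoice G p st a]⟩

noncomputable def bfold (G : SimpleGraph W) (p : W → Bool) (L : List (Sym2 W)) : BSt W :=
  L.foldl (bstep G p) ⟨id, [], []⟩

/-- B's strategy as a move function. -/
noncomputable def bmove (G : SimpleGraph W) (p : W → Bool) (L : List (Sym2 W)) : Sym2 W :=
  ((bfold G p L).blu).getLastD junkE

variable {G : SimpleGraph W} {p : W → Bool}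

lemma bfold_nil : bfold G p [] = ⟨id, [], []⟩ := rfl

lemma bfold_concat (L : List (Sym2 W)) (a : Sym2 W) :
    bfold G p (L ++ [a]) = bstep G p (bfold G p L) a := by
  simp [bfold]

lemma bmove_concat (L : List (Sym2 W)) (a : Sym2 W) :
    bmove G p (L ++ [a]) = bchoice G p (bfold G p L) a := by
  rw [bmove, bfold_concat, bstep]
  exact List.getLastD_concat

lemma blu_length (L : List (Sym2 W)) : (bfold G p L).blu.length = L.length := by
  induction L using List.reverseRecOn with
  | nil => rfl
  | append_singleton L a ih => rw [bfold_concat]; simp [bstep, ih]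

lemma col_length (L : List (Sym2 W)) : (bfold G p L).col.length = 2 * L.length := by
  induction L using List.reverseRecOn with
  | nil => rfl
  | append_singleton L a ih => rw [bfold_concat]; simp [bstep, ih]; omega

lemma red_sublist (L : List (Sym2 W)) : L.Sublist (bfold G p L).col := by
  induction L using List.reverseRecOn with
  | nil => simp
  | append_singleton L a ih =>
    rw [bfold_concat, bstep]
    have : ((bfold G p L).col ++ [a]).Sublist ((bfold G p L).col ++ [a, bchoice G p (bfold G p L) a]) := by
      apply List.Sublist.append_left
      simp
    exact ((ih.append_right [a]).trans this).trans (by simp)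

lemma blu_sublist (L : List (Sym2 W)) : (bfold G p L).blu.Sublist (bfold G p L).col := by
  induction L using List.reverseRecOn with
  | nil => simp [bfold_nil]
  | append_singleton L a ih =>
    rw [bfold_concat, bstep]
    simp only []
    have h1 : ((bfold G p L).blu ++ [bchoice G p (bfold G p L) a]).Sublist
        ((bfold G p L).col ++ [a, bchoice G p (bfold G p L) a]) := by
      have : [bchoice G p (bfold G p L) a].Sublist [a, bchoice G p (bfold G p L) a] := by simp
      exact List.Sublist.append ih this
    exact h1

lemma blu_prefix (L T : List (Sym2 W)) :
    (bfold G p L).blu <+: (bfold G p (L ++ T)).blu := by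
  induction T using List.reverseRecOn with
  | nil => simp
  | append_singleton T a ih =>
    rw [← List.append_assoc, bfold_concat, bstep]
    exact ih.trans (List.prefix_append _ _)

lemma col_mem (L : List (Sym2 W)) (e : Sym2 W) :
    e ∈ (bfold G p L).col ↔ e ∈ L ∨ e ∈ (bfold G p L).blu := by
  induction L using List.reverseRecOn with
  | nil => simp [bfold_nil]
  | append_singleton L a ih =>
    rw [bfold_concat, bstep]
    simp only [List.mem_append, List.mem_singleton, List.mem_cons, ih]
    constructor
    · rintro (h | h | h) <;> tauto
    · rintro (h | h) <;> tauto

end BMachine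
section BValid

variable {W : Type*} [Fintype W] [DecidableEq W] [Nonempty W]
variable {G : SimpleGraph W} {p : W → Bool}

lemma getLastD_mem {α : Type*} (l : List α) (d : α) (h : l ≠ []) : l.getLastD d ∈ l := by
  induction l using List.reverseRecOn with
  | nil => exact absurd rfl h
  | append_singleton l a _ => rw [List.getLastD_concat]; simp

lemma bcand_cases (st : BSt W) (a : Sym2 W) :
    ((bcand G p st a).2 = st.sig ∧
      ((bcand G p st a).1 = pickFresh G (st.col ++ [a]) ∨
        ∃ u w, unpack p a = some (u, w) ∧ st.sig u ≠ u ∧ (bcand G p st a).1 = s(st.sig u, w)))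
    ∨ ∃ u w q, unpack p a = some (u, w) ∧ st.sig u = u ∧ st.sig q = q ∧ q ≠ u ∧ p q = true ∧
        (bcand G p st a).1 = s(q, w) ∧
        (bcand G p st a).2 = fun x => if x = u then q else if x = q then u else st.sig x := by
  rcases hunp : unpack p a with _ | ⟨u, w⟩
  · have hb : bcand G p st a = (pickFresh G (st.col ++ [a]), st.sig) := by
      simp only [bcand, hunp]
    exact Or.inl ⟨by rw [hb], Or.inl (by rw [hb])⟩
  · by_cases hu : st.sig u ≠ u
    · have hb : bcand G p st a = (s(st.sig u, w), st.sig) := by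
        simp only [bcand, hunp, if_pos hu]
      exact Or.inl ⟨by rw [hb], Or.inr ⟨u, w, rfl, hu, by rw [hb]⟩⟩
    · push_neg at hu
      by_cases h : ∃ q, st.sig q = q ∧ q ≠ u ∧ p q = true
      · have hb : bcand G p st a = (s(h.choose, w),
            fun x => if x = u then h.choose else if x = h.choose then u else st.sig x) := by
          simp only [bcand, hunp, if_neg (not_not_intro hu), dif_pos h]
        exact Or.inr ⟨u, w, h.choose, rfl, hu, h.choose_spec.1, h.choose_spec.2.1,
          h.choose_spec.2.2, by rw [hb], by rw [hb]⟩
      · have hb : bcand G p st a = (pickFresh G (st.col ++ [a]), st.sig) := by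
          simp only [bcand, hunp, if_neg (not_not_intro hu), dif_neg h]
        exact Or.inl ⟨by rw [hb], Or.inl (by rw [hb])⟩

lemma sig_p (L : List (Sym2 W)) (x : W) : p ((bfold G p L).sig x) = p x := by
  induction L using List.reverseRecOn generalizing x with
  | nil => rfl
  | append_singleton L a ih =>
    rw [bfold_concat, bstep]
    rcases bcand_cases (G := G) (bfold G p L) a with ⟨hs, -⟩ | ⟨u, w, q, hunp, _, _, _, hq, -, hs⟩
    · rw [hs]; exact ih x
    · obtain ⟨hu, -, -⟩ := unpack_eq_some hunp
      rw [hs]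
      dsimp only
      split_ifs with h1 h2
      · rw [hq, h1, hu]
      · rw [hu, h2, hq]
      · exact ih x

lemma sig_false (L : List (Sym2 W)) {x : W} (hx : p x = false) :
    (bfold G p L).sig x = x := by
  induction L using List.reverseRecOn with
  | nil => rfl
  | append_singleton L a ih =>
    rw [bfold_concat, bstep]
    rcases bcand_cases (G := G) (bfold G p L) a with ⟨hs, -⟩ | ⟨u, w, q, hunp, _, _, _, hq, -, hs⟩
    · rw [hs]; exact ih
    · obtain ⟨hu, -, -⟩ := unpack_eq_some hunp
      rw [hs]
      dsimp only
      have h1 : x ≠ u := fun h => by rw [h, hu] at hx; cases hx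
      have h2 : x ≠ q := fun h => by rw [h, hq] at hx; cases hx
      rw [if_neg h1, if_neg h2]; exact ih

lemma bchoice_not_mem {st : BSt W} {a : Sym2 W}
    (hlen : (st.col ++ [a]).length < G.edgeSet.ncard) :
    bchoice G p st a ∉ st.col ++ [a] := by
  rw [bchoice]; split_ifs with h
  · exact (pickFresh_spec hlen).2
  · exact h

lemma bchoice_mem (hAdj : ∀ u v, G.Adj u v ↔ p u ≠ p v) (L : List (Sym2 W)) (a : Sym2 W)
    (hlen : ((bfold G p L).col ++ [a]).length < G.edgeSet.ncard) :
    bchoice G p (bfold G p L) a ∈ G.edgeSet := by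
  rw [bchoice]; split_ifs with h
  · exact (pickFresh_spec hlen).1
  · rcases bcand_cases (G := G) (bfold G p L) a with
      ⟨-, h1 | ⟨u, w, hunp, hne, h1⟩⟩ | ⟨u, w, q, hunp, -, -, -, hq, h1, -⟩
    · rw [h1]; exact (pickFresh_spec hlen).1
    · rw [h1, SimpleGraph.mem_edgeSet, hAdj]
      obtain ⟨hu, hw, -⟩ := unpack_eq_some hunp
      rw [sig_p (G := G) (p := p) L u, hu, hw]; simp
    · rw [h1, SimpleGraph.mem_edgeSet, hAdj]
      obtain ⟨hu, hw, -⟩ := unpack_eq_some hunp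
      rw [hq, hw]; simp

lemma bmove_mem_blu (L : List (Sym2 W)) (h : L ≠ []) :
    bmove G p L ∈ (bfold G p L).blu := by
  apply getLastD_mem
  intro hcon
  have := blu_length (G := G) (p := p) L
  rw [hcon] at this
  exact h (List.length_eq_zero_iff.mp this.symm)

/-- B's pairing strategy is a valid strategy. -/
noncomputable def BStrat (hAdj : ∀ u v, G.Adj u v ↔ p u ≠ p v) : BStrategy G where
  move := bmove G p
  valid := by
    intro L hne hnd hmem hlen
    obtain ⟨L0, a, rfl⟩ : ∃ L0 a, L = L0 ++ [a] := by
      rcases List.eq_nil_or_concat L with h | ⟨L0, a, h⟩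
      · exact absurd h hne
      · exact ⟨L0, a, by simpa using h⟩
    have hlen1 : ((bfold G p L0).col ++ [a]).length < G.edgeSet.ncard := by
      have := col_length (G := G) (p := p) L0
      simp only [List.length_append, List.length_singleton] at hlen ⊢
      omega
    rw [bmove_concat]
    refine ⟨bchoice_mem hAdj L0 a hlen1, ?_, ?_⟩
    · intro hmem'
      apply bchoice_not_mem hlen1
      rcases List.mem_append.1 hmem' with h | h
      · exact List.mem_append.2 (Or.inl ((red_sublist L0).subset h))
      · exact List.mem_append.2 (Or.inr h)
    · intro L' hne' hpre hnL' heq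
      have hpre0 : L' <+: L0 := by
        have h1 : L'.length ≤ L0.length := by
          have hle := hpre.length_le
          simp only [List.length_append, List.length_singleton] at hle
          rcases Nat.eq_or_lt_of_le hle with heq | hlt
          · exact absurd (hpre.eq_of_length (by simp [heq])) hnL'
          · omega
        exact List.prefix_of_prefix_length_le hpre (L0.prefix_append [a]) h1
      obtain ⟨T, rfl⟩ := hpre0
      have h1 : bmove G p L' ∈ (bfold G p (L' ++ T)).blu :=
        (blu_prefix L' T).subset (bmove_mem_blu L' hne')
      have h2 : bmove G p L' ∈ (bfold G p (L' ++ T)).col := (blu_sublist _).subset h1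
      exact bchoice_not_mem hlen1 (heq ▸ List.mem_append.2 (Or.inl h2))

end BValid
section AValid

variable {W : Type*} [Fintype W] [DecidableEq W] [Nonempty W]
variable {G : SimpleGraph W}

noncomputable def astep (G : SimpleGraph W) :
    List (Sym2 W) × List (Sym2 W) → Sym2 W → List (Sym2 W) × List (Sym2 W) :=
  fun PM a => (PM.1 ++ [a], PM.2 ++ [pickFresh G (PM.1 ++ [a] ++ PM.2)])

noncomputable def afold (G : SimpleGraph W) (L : List (Sym2 W)) :
    List (Sym2 W) × List (Sym2 W) :=
  L.foldl (astep G) ([], [pickFresh G ([] : List (Sym2 W))])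

noncomputable def amove (G : SimpleGraph W) (L : List (Sym2 W)) : Sym2 W :=
  (afold G L).2.getLastD junkE

lemma afold_concat (L : List (Sym2 W)) (a : Sym2 W) :
    afold G (L ++ [a]) = astep G (afold G L) a := by
  simp [afold]

lemma afold_fst (L : List (Sym2 W)) : (afold G L).1 = L := by
  induction L using List.reverseRecOn with
  | nil => rfl
  | append_singleton L a ih => rw [afold_concat, astep, ih]

lemma afold_snd_length (L : List (Sym2 W)) : (afold G L).2.length = L.length + 1 := by
  induction L using List.reverseRecOn with
  | nil => rfl
  | append_singleton L a ih => rw [afold_concat, astep]; simp [ih]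

lemma afold_snd_prefix (L T : List (Sym2 W)) : (afold G L).2 <+: (afold G (L ++ T)).2 := by
  induction T using List.reverseRecOn with
  | nil => simp
  | append_singleton T a ih =>
    rw [← List.append_assoc, afold_concat, astep]
    exact ih.trans (List.prefix_append _ _)

lemma amove_concat (L : List (Sym2 W)) (a : Sym2 W) :
    amove G (L ++ [a]) = pickFresh G (L ++ [a] ++ (afold G L).2) := by
  rw [amove, afold_concat, astep, afold_fst]
  exact List.getLastD_concat

lemma amove_mem_afold (L : List (Sym2 W)) : amove G L ∈ (afold G L).2 := by
  apply getLastD_mem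
  intro hcon
  have := afold_snd_length (G := G) L
  rw [hcon] at this
  simp at this

/-- The greedy strategy for A is valid. -/
noncomputable def AStrat (G : SimpleGraph W) : AStrategy G where
  move := amove G
  valid := by
    intro L hnd hmem hlen
    rcases List.eq_nil_or_concat L with rfl | ⟨L0, a, h⟩
    · have h0 : ([] : List (Sym2 W)).length < G.edgeSet.ncard := by simp only [List.length_nil] at hlen ⊢; omega
      have hs := pickFresh_spec (G := G) h0
      have hm : amove G ([] : List (Sym2 W)) = pickFresh G ([] : List (Sym2 W)) := rfl
      refine ⟨by rw [hm]; exact hs.1, by simp, ?_⟩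
      intro L' hpre hne
      exact absurd (List.prefix_nil.mp hpre) hne
    · obtain rfl : L = L0 ++ [a] := by simpa using h
      have hlen1 : (L0 ++ [a] ++ (afold G L0).2).length < G.edgeSet.ncard := by
        have := afold_snd_length (G := G) L0
        simp only [List.length_append, List.length_singleton] at hlen ⊢
        omega
      have hspec := pickFresh_spec (G := G) hlen1
      rw [amove_concat]
      refine ⟨hspec.1, ?_, ?_⟩
      · intro hmem'
        exact hspec.2 (List.mem_append.2 (Or.inl hmem'))
      · intro L' hpre hnL' heq
        have hpre0 : L' <+: L0 := by
          have h1 : L'.length ≤ L0.length := by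
            have hle := hpre.length_le
            simp only [List.length_append, List.length_singleton] at hle
            rcases Nat.eq_or_lt_of_le hle with heq' | hlt
            · exact absurd (hpre.eq_of_length (by simp [heq'])) hnL'
            · omega
          exact List.prefix_of_prefix_length_le hpre (L0.prefix_append [a]) h1
        obtain ⟨T, rfl⟩ := hpre0
        have h1 : amove G L' ∈ (afold G (L' ++ T)).2 :=
          (afold_snd_prefix L' T).subset (amove_mem_afold L')
        exact hspec.2 (heq ▸ List.mem_append.2 (Or.inr h1))

end AValid
section Rounds

variable {α : Type*}

lemma sym2_exists (e : Sym2 α) : ∃ x y, e = s(x, y) := by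
  induction e with
  | _ x y => exact ⟨x, y, rfl⟩

lemma sym2_map_congr {f g : α → α} {e : Sym2 α} (h : ∀ x ∈ e, f x = g x) :
    e.map f = e.map g := by
  induction e with
  | _ x y =>
    rw [Sym2.map_pair_eq, Sym2.map_pair_eq, h x (Sym2.mem_mk_left x y),
      h y (Sym2.mem_mk_right x y)]

lemma sym2_map_invol {f : α → α} (h : ∀ x, f (f x) = x) (e : Sym2 α) :
    (e.map f).map f = e := by
  induction e with
  | _ x y => rw [Sym2.map_pair_eq, Sym2.map_pair_eq, h x, h y]

lemma rounds_succ (S1 S2 : List (Sym2 α) → Sym2 α) (n : ℕ) :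
    rounds S1 S2 (n + 1) = rounds S1 S2 n ++
      [(S1 ((rounds S1 S2 n).map Prod.snd),
        S2 ((rounds S1 S2 n).map Prod.fst ++ [S1 ((rounds S1 S2 n).map Prod.snd)]))] := rfl

lemma rounds_length (S1 S2 : List (Sym2 α) → Sym2 α) (i : ℕ) :
    (rounds S1 S2 i).length = i := by
  induction i with
  | zero => rfl
  | succ n ih => rw [rounds_succ]; simp [ih]

lemma rounds_prefix (S1 S2 : List (Sym2 α) → Sym2 α) {j i : ℕ} (h : j ≤ i) :
    rounds S1 S2 j <+: rounds S1 S2 i := by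
  induction i with
  | zero => cases Nat.le_zero.mp h; exact List.prefix_rfl
  | succ n ih =>
    rcases Nat.lt_or_ge j (n + 1) with h1 | h1
    · exact (ih (Nat.lt_succ_iff.mp h1)).trans (by rw [rounds_succ]; exact List.prefix_append _ _)
    · have : j = n + 1 := le_antisymm h h1
      subst this; exact List.prefix_rfl

end Rounds

section Trace

variable {W : Type*} [Fintype W] [DecidableEq W] [Nonempty W]
variable (G : SimpleGraph W) (p : W → Bool)

/-- Red edges after `i` rounds of the real game. -/
noncomputable def Rl (S1 : AStrategy G) (i : ℕ) : List (Sym2 W) :=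
  (rounds S1.move (bmove G p) i).map Prod.fst

/-- Blue edges after `i` rounds of the real game. -/
noncomputable def Bll (S1 : AStrategy G) (i : ℕ) : List (Sym2 W) :=
  (rounds S1.move (bmove G p) i).map Prod.snd

variable {G p}
variable {S1 : AStrategy G}

lemma Rl_zero : Rl G p S1 0 = [] := rfl

lemma Bll_zero : Bll G p S1 0 = [] := rfl

lemma Rl_succ (i : ℕ) :
    Rl G p S1 (i + 1) = Rl G p S1 i ++ [S1.move (Bll G p S1 i)] := by
  rw [Rl, rounds_succ]; simp [Rl, Bll]

lemma Bll_succ (i : ℕ) :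
    Bll G p S1 (i + 1) = Bll G p S1 i ++
      [bmove G p (Rl G p S1 i ++ [S1.move (Bll G p S1 i)])] := by
  rw [Bll, rounds_succ]; simp [Rl, Bll]

lemma Rl_length (i : ℕ) : (Rl G p S1 i).length = i := by
  simp [Rl, rounds_length]

lemma Bll_length (i : ℕ) : (Bll G p S1 i).length = i := by
  simp [Bll, rounds_length]

lemma Bll_prefix {j i : ℕ} (h : j ≤ i) : Bll G p S1 j <+: Bll G p S1 i :=
  (rounds_prefix _ _ h).map _

lemma Rl_mem {i : ℕ} {x : Sym2 W} (hx : x ∈ Rl G p S1 i) :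
    ∃ j, j < i ∧ x = S1.move (Bll G p S1 j) := by
  induction i with
  | zero => simp [Rl_zero] at hx
  | succ n ih =>
    rw [Rl_succ] at hx
    rcases List.mem_append.1 hx with h | h
    · obtain ⟨j, hj, hEq⟩ := ih h
      exact ⟨j, Nat.lt_succ_of_lt hj, hEq⟩
    · exact ⟨n, Nat.lt_succ_self n, List.mem_singleton.1 h⟩

end Trace
section Invariant

variable {W : Type*} [Fintype W] [DecidableEq W] [Nonempty W]
variable {G : SimpleGraph W} {p : W → Bool} {m : ℕ}

/-- Invariant of the real game after `i` rounds, when B plays the pairing strategy. -/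
structure Inv (G : SimpleGraph W) (p : W → Bool) (S1 : AStrategy G) (i : ℕ) : Prop where
  hblu : Bll G p S1 i = (bfold G p (Rl G p S1 i)).blu
  hnd : (bfold G p (Rl G p S1 i)).col.Nodup
  hmemE : ∀ e ∈ (bfold G p (Rl G p S1 i)).col, e ∈ G.edgeSet
  hinv : ∀ x, (bfold G p (Rl G p S1 i)).sig ((bfold G p (Rl G p S1 i)).sig x) = x
  hsupp : {x | (bfold G p (Rl G p S1 i)).sig x ≠ x}.ncard ≤ 2 * i
  htouch : ∀ e ∈ (bfold G p (Rl G p S1 i)).col, ∀ x ∈ e, p x = true →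
    (bfold G p (Rl G p S1 i)).sig x ≠ x
  hmap : (bfold G p (Rl G p S1 i)).blu
    = (Rl G p S1 i).map (Sym2.map (bfold G p (Rl G p S1 i)).sig)

lemma inv_zero (S1 : AStrategy G) : Inv G p S1 0 := by
  refine ⟨?_, ?_, ?_, ?_, ?_, ?_, ?_⟩ <;> simp [Rl_zero, Bll_zero, bfold_nil]

lemma inv_succ (hAdj : ∀ u v, G.Adj u v ↔ p u ≠ p v)
    (hm : {x | p x = true}.ncard = m) (hcard : m ≤ G.edgeSet.ncard)
    (S1 : AStrategy G) (i : ℕ) (hi : i + 1 ≤ (m - 1) / 2) (IH : Inv G p S1 i) :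
    Inv G p S1 (i + 1) := by
  have hm3 : 2 * i + 3 ≤ m := by omega
  obtain ⟨hblu, hnd, hmemE, hinv, hsupp, htouch, hmap⟩ := IH
  set R := Rl G p S1 i with hRdef
  set Bl := Bll G p S1 i with hBldef
  set st := bfold G p R with hstdef
  set a := S1.move Bl with hadef
  have hRlen : R.length = i := Rl_length i
  have hBlen : Bl.length = i := Bll_length i
  have hAv := S1.valid Bl (hblu ▸ (blu_sublist R).nodup hnd)
    (fun e he => hmemE e ((blu_sublist R).subset (hblu ▸ he)))
    (by rw [hBlen]; omega)
  rw [← hadef] at hAv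
  obtain ⟨haE, haBl, hapre⟩ := hAv
  have haR : a ∉ R := by
    intro hmem
    obtain ⟨j, hj, hEq⟩ := Rl_mem hmem
    refine hapre (Bll G p S1 j) (hBldef ▸ Bll_prefix (Nat.le_of_lt hj)) ?_ hEq.symm
    intro hc
    have := congrArg List.length hc
    rw [Bll_length, hBlen] at this
    omega
  have hacol : a ∉ st.col := by
    rw [col_mem]
    push_neg
    exact ⟨haR, fun hc => haBl (hblu ▸ hc)⟩
  obtain ⟨u, w, hu, hw, hael⟩ : ∃ u w, p u = true ∧ p w = false ∧ a = s(u, w) := by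
    obtain ⟨x, y, hxy⟩ := sym2_exists a
    have hadj : G.Adj x y := by rw [← SimpleGraph.mem_edgeSet, ← hxy]; exact haE
    have hne := (hAdj x y).1 hadj
    rcases Bool.eq_false_or_eq_true (p x) with hx | hx
    · refine ⟨x, y, hx, ?_, hxy⟩
      rcases Bool.eq_false_or_eq_true (p y) with hy | hy
      · exact absurd (hx.trans hy.symm) hne
      · exact hy
    · refine ⟨y, x, ?_, hx, hxy.trans Sym2.eq_swap⟩
      rcases Bool.eq_false_or_eq_true (p y) with hy | hy
      · exact hy
      · exact absurd (hx.trans hy.symm) hne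
  have hunp : unpack p a = some (u, w) := by rw [hael]; exact unpack_mk p hu hw
  -- the partner and the new involution
  obtain ⟨q', σ', P1, P2, hq'u, hq'p, hσu, hσq, hσfalse, hσelse, hkeep, hmapold, hinvnew,
      hsuppsub, hnotcol⟩ :
      ∃ q' σ', (bcand G p st a).1 = s(q', w) ∧ (bcand G p st a).2 = σ' ∧ q' ≠ u ∧
        p q' = true ∧ σ' u = q' ∧ σ' q' = u ∧ (∀ x, p x = false → σ' x = x) ∧
        (∀ x, x ≠ u → x ≠ q' → σ' x = st.sig x) ∧
        (∀ x, st.sig x ≠ x → σ' x ≠ x) ∧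
        (∀ r ∈ R, Sym2.map σ' r = Sym2.map st.sig r) ∧ (∀ x, σ' (σ' x) = x) ∧
        {x | σ' x ≠ x} ⊆ {x | st.sig x ≠ x} ∪ {u, q'} ∧ s(q', w) ∉ st.col := by
    by_cases hcase : st.sig u = u
    · -- new pair: a fresh partner exists
      have hex : ∃ q, st.sig q = q ∧ q ≠ u ∧ p q = true := by
        by_contra hc
        push_neg at hc
        have hsub : {x | p x = true} ⊆ {x | st.sig x ≠ x} ∪ {u} := by
          intro x hx
          by_cases h1 : st.sig x = x
          · by_cases h2 : x = u
            · exact Or.inr h2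
            · exact absurd hx (hc x h1 h2)
          · exact Or.inl h1
        have hle := Set.ncard_le_ncard hsub (Set.toFinite _)
        have hun := Set.ncard_union_le {x | st.sig x ≠ x} {u}
        rw [hm] at hle
        rw [Set.ncard_singleton] at hun
        omega
      obtain ⟨hq1, hq2, hq3⟩ := hex.choose_spec
      set q' := hex.choose with hq'def
      set σ' : W → W := fun x => if x = u then q' else if x = q' then u else st.sig x
        with hσ'def
      have hb : bcand G p st a = (s(q', w), σ') := by
        simp only [bcand, hunp, if_neg (not_not_intro hcase), dif_pos hex]
        rfl
      have e1 : σ' u = q' := by simp [hσ'def]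
      have e2 : σ' q' = u := by simp [hσ'def, hq2]
      have e3 : ∀ x, x ≠ u → x ≠ q' → σ' x = st.sig x := by
        intro x h1 h2; simp [hσ'def, h1, h2]
      refine ⟨q', σ', by rw [hb], by rw [hb], hq2, hq3, e1, e2, ?_, e3, ?_, ?_, ?_, ?_, ?_⟩
      · intro x hx
        have h1 : x ≠ u := fun hc => by rw [hc, hu] at hx; cases hx
        have h2 : x ≠ q' := fun hc => by rw [hc, hq3] at hx; cases hx
        rw [e3 x h1 h2]; exact sig_false R hx
      · intro x hx
        have h1 : x ≠ u := fun hc => hx (hc ▸ hcase)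
        have h2 : x ≠ q' := fun hc => hx (hc ▸ hq1)
        rw [e3 x h1 h2]; exact hx
      · intro r hr
        apply sym2_map_congr
        intro x hxr
        have hxcol : r ∈ st.col := (red_sublist R).subset hr
        have h1 : x ≠ u := by
          rintro rfl; exact htouch r hxcol _ hxr hu hcase
        have h2 : x ≠ q' := by
          rintro rfl; exact htouch r hxcol _ hxr hq3 hq1
        exact e3 x h1 h2
      · intro x
        by_cases h1 : x = u
        · rw [h1, e1, e2]
        · by_cases h2 : x = q'
          · rw [h2, e2, e1]
          · rw [e3 x h1 h2]
            have h3 : st.sig x ≠ u := fun hc => h1 (by rw [← hinv x, hc, hcase])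
            have h4 : st.sig x ≠ q' := fun hc => h2 (by rw [← hinv x, hc, hq1])
            rw [e3 _ h3 h4]; exact hinv x
      · intro x hx
        simp only [Set.mem_setOf_eq] at hx
        simp only [Set.mem_union, Set.mem_setOf_eq, Set.mem_insert_iff,
          Set.mem_singleton_iff]
        by_cases h1 : x = u
        · exact Or.inr (Or.inl h1)
        · by_cases h2 : x = q'
          · exact Or.inr (Or.inr h2)
          · exact Or.inl (by rw [← e3 x h1 h2]; exact hx)
      · intro hmem
        exact htouch _ hmem q' (Sym2.mem_mk_left q' w) hq3 hq1
    · -- u is already matched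
      have hb : bcand G p st a = (s(st.sig u, w), st.sig) := by
        simp only [bcand, hunp, if_pos hcase]
      refine ⟨st.sig u, st.sig, by rw [hb], by rw [hb], hcase, (sig_p (G := G) (p := p) R u).trans hu, rfl, hinv u,
        fun x hx => sig_false R hx, fun x _ _ => rfl, fun x hx => hx, fun r _ => rfl, hinv,
        fun x hx => Set.mem_union_left _ hx, ?_⟩
      intro hmem
      rcases (col_mem R _).1 hmem with hR | hB
      · have hmem2 : Sym2.map st.sig s(st.sig u, w) ∈ st.blu :=
          hmap ▸ List.mem_map_of_mem (f := Sym2.map st.sig) hR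
        rw [Sym2.map_pair_eq, hinv u, sig_false R hw] at hmem2
        exact haBl (hblu ▸ (hael ▸ hmem2))
      · rw [hmap] at hB
        obtain ⟨r, hr, hrEq⟩ := List.mem_map.1 hB
        have hrval : r = s(u, w) := by
          have := congrArg (Sym2.map st.sig) hrEq
          rw [sym2_map_invol hinv, Sym2.map_pair_eq, hinv u, sig_false R hw] at this
          exact this
        exact haR (hael ▸ hrval ▸ hr)
  -- B's reply is the candidate
  have hbneq : s(q', w) ≠ a := by
    rw [hael]
    intro hEq
    rcases Sym2.eq_iff.1 hEq with ⟨h1, -⟩ | ⟨h1, -⟩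
    · exact hq'u h1
    · rw [h1, hw] at hq'p; cases hq'p
  have hfresh : (bcand G p st a).1 ∉ st.col ++ [a] := by
    rw [P1]
    simp only [List.mem_append, List.mem_singleton]
    rintro (h | h)
    · exact hnotcol h
    · exact hbneq h
  have hbch : bchoice G p st a = s(q', w) := by
    rw [bchoice, if_neg hfresh, P1]
  have hstep : bfold G p (R ++ [a]) = ⟨σ', st.col ++ [a, s(q', w)], st.blu ++ [s(q', w)]⟩ := by
    rw [bfold_concat, ← hstdef]
    simp only [bstep]
    rw [P2, hbch]
  have hRsucc : Rl G p S1 (i + 1) = R ++ [a] := by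
    rw [Rl_succ, ← hRdef, ← hBldef, ← hadef]
  have hBsucc : Bll G p S1 (i + 1) = st.blu ++ [s(q', w)] := by
    rw [Bll_succ, ← hRdef, ← hBldef, ← hadef, bmove_concat, ← hstdef, hbch, hblu]
  have hnewE : s(q', w) ∈ G.edgeSet := by
    rw [SimpleGraph.mem_edgeSet, hAdj, hq'p, hw]; simp
  refine ⟨?_, ?_, ?_, ?_, ?_, ?_, ?_⟩
  · rw [hBsucc, hRsucc, hstep]
  · rw [hRsucc, hstep]
    refine List.nodup_append.2 ⟨hnd, ?_, ?_⟩
    · simp [Ne.symm hbneq]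
    · intro x hx y hx2 hxy; subst hxy
      rcases List.mem_cons.1 hx2 with rfl | hx3
      · exact hacol hx
      · rw [List.mem_singleton.1 hx3] at hx; exact hnotcol hx
  · intro e he
    rw [hRsucc, hstep] at he
    dsimp only at he
    rcases List.mem_append.1 he with h | h
    · exact hmemE e h
    · rcases List.mem_cons.1 h with rfl | h2
      · exact haE
      · rw [List.mem_singleton.1 h2]; exact hnewE
  · rw [hRsucc, hstep]; exact hinvnew
  · rw [hRsucc, hstep]
    dsimp only
    have h2 : ({u, q'} : Set W).ncard ≤ 2 := by
      have := Set.ncard_insert_le u ({q'} : Set W)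
      simpa [Set.ncard_singleton] using this
    have h3 := Set.ncard_le_ncard hsuppsub (Set.toFinite _)
    have h4 := Set.ncard_union_le {x | st.sig x ≠ x} ({u, q'} : Set W)
    omega
  · intro e he x hxe hpx
    rw [hRsucc, hstep] at he ⊢
    dsimp only at he ⊢
    rcases List.mem_append.1 he with h | h
    · exact hkeep x (htouch e h x hxe hpx)
    · rcases List.mem_cons.1 h with rfl | h2
      · rw [hael] at hxe
        rcases Sym2.mem_iff.1 hxe with rfl | rfl
        · rw [hσu]; exact hq'u
        · rw [hpx] at hw; cases hw
      · rw [List.mem_singleton.1 h2] at hxe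
        rcases Sym2.mem_iff.1 hxe with rfl | rfl
        · rw [hσq]; exact Ne.symm hq'u
        · rw [hpx] at hw; cases hw
  · rw [hRsucc, hstep]
    dsimp only
    rw [List.map_append]
    congr 1
    · rw [hmap]
      exact List.map_congr_left fun r hr => (hmapold r hr).symm
    · simp only [List.map_cons, List.map_nil]
      rw [hael, Sym2.map_pair_eq, hσu, hσfalse w hw]

end Invariant
section CoreThm

lemma playLength_le {V : Type*} (G : SimpleGraph V) (S1 S2 : List (Sym2 V) → Sym2 V) :
    playLength G S1 S2 ≤ G.edgeSet.ncard / 2 := by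
  rw [playLength]
  rcases Set.eq_empty_or_nonempty {l : ℕ | l ≤ G.edgeSet.ncard / 2 ∧ ∀ i ≤ l, isoAt S1 S2 i}
    with h | h
  · rw [h, csSup_empty]
    exact bot_le
  · exact csSup_le h fun x hx => hx.1

variable {W : Type*} [Fintype W] [DecidableEq W] [Nonempty W]
variable {G : SimpleGraph W} {p : W → Bool} {m : ℕ}

lemma inv_isoAt (S1 : AStrategy G) (i : ℕ) (h : Inv G p S1 i) :
    isoAt S1.move (bmove G p) i := by
  obtain ⟨hblu, -, -, hinv, -, -, hmap⟩ := h
  set R := Rl G p S1 i with hRdef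
  set σ := (bfold G p R).sig with hσdef
  have hσinj : Function.Injective σ := fun x y hxy => by
    rw [← hinv x, ← hinv y, hxy]
  refine ⟨⟨⟨σ, σ, hinv, hinv⟩, ?_⟩⟩
  intro x y
  show (graphOf (Bll G p S1 i)).Adj (σ x) (σ y) ↔ (graphOf R).Adj x y
  rw [graphOf, graphOf, SimpleGraph.fromEdgeSet_adj, SimpleGraph.fromEdgeSet_adj]
  constructor
  · rintro ⟨h1, h2⟩
    simp only [Set.mem_setOf_eq] at h1
    rw [hblu, hmap] at h1
    obtain ⟨r, hr, hrEq⟩ := List.mem_map.1 h1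
    have : r = s(x, y) := by
      have h3 := congrArg (Sym2.map σ) hrEq
      rw [sym2_map_invol hinv, Sym2.map_pair_eq, hinv, hinv] at h3
      exact h3
    exact ⟨this ▸ hr, fun hc => h2 (hc ▸ rfl)⟩
  · rintro ⟨h1, h2⟩
    simp only [Set.mem_setOf_eq] at h1 ⊢
    constructor
    · rw [hblu, hmap]
      refine List.mem_map.2 ⟨s(x, y), h1, ?_⟩
      rw [Sym2.map_pair_eq]
    · exact fun hc => h2 (hσinj hc)

/-- Core lemma: if the `p`-side has `m` vertices, B's pairing strategy on that side
survives `(m-1)/2` rounds against any strategy of A. -/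
lemma core (hAdj : ∀ u v, G.Adj u v ↔ p u ≠ p v)
    (hm : {x | p x = true}.ncard = m) (hw : ∃ w, p w = false) :
    (m - 1) / 2 ≤ symLen G := by
  classical
  obtain ⟨w0, hw0⟩ := hw
  -- m ≤ number of edges
  have hcard : m ≤ G.edgeSet.ncard := by
    have hf : Function.Injective (fun x : {x | p x = true} =>
        (⟨s((x : W), w0), by
          rw [SimpleGraph.mem_edgeSet, hAdj, x.2, hw0]; simp⟩ : G.edgeSet)) := by
      rintro ⟨x, hx⟩ ⟨y, hy⟩ hEq
      simp only [Subtype.mk.injEq] at hEq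
      have hx' : p x = true := hx
      rcases Sym2.eq_iff.1 hEq with ⟨h1, -⟩ | ⟨h1, h2⟩
      · exact Subtype.ext h1
      · rw [h1, hw0] at hx'; cases hx'
    have := Nat.card_le_card_of_injective _ hf
    rwa [Nat.card_coe_set_eq, Nat.card_coe_set_eq, hm] at this
  have key : ∀ S1 : AStrategy G, (m - 1) / 2 ≤ playLength G S1.move (bmove G p) := by
    intro S1
    have hInv : ∀ i, i ≤ (m - 1) / 2 → Inv G p S1 i := by
      intro i
      induction i with
      | zero => exact fun _ => inv_zero S1
      | succ n ih => exact fun h => inv_succ hAdj hm hcard S1 n h (ih (by omega))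
    have hmem : (m - 1) / 2 ∈ {l : ℕ | l ≤ G.edgeSet.ncard / 2 ∧
        ∀ i ≤ l, isoAt S1.move (bmove G p) i} := by
      constructor
      · exact Nat.div_le_div_right (le_trans (Nat.sub_le m 1) hcard)
      · exact fun i hi => inv_isoAt S1 i (hInv i hi)
    exact le_csSup ⟨G.edgeSet.ncard / 2, fun x hx => hx.1⟩ hmem
  haveI : Nonempty (AStrategy G) := ⟨AStrat G⟩
  have h1 : (m - 1) / 2 ≤ ⨅ S1 : AStrategy G, playLength G S1.move (BStrat hAdj).move :=
    le_ciInf fun S1 => key S1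
  rw [symLen]
  refine h1.trans (le_ciSup (f := fun S2 : BStrategy G =>
    ⨅ S1 : AStrategy G, playLength G S1.move S2.move)
    ⟨G.edgeSet.ncard / 2, ?_⟩ (BStrat hAdj))
  rintro x ⟨S2, rfl⟩
  exact le_trans (ciInf_le (OrderBot.bddBelow _) (AStrat G)) (playLength_le G _ _)

end CoreThm
/-- If `m` and `l` are both odd, then
`λ(K_{m,l}) ≥ max{ (m−1)/2, (l−1)/2 }`. -/
theorem statement18 (m l : ℕ) (hm : Odd m) (hl : Odd l) :
    max ((m - 1) / 2) ((l - 1) / 2) ≤ symLen (completeBipartiteGraph (Fin m) (Fin l)) := by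
  have hm1 : 1 ≤ m := hm.pos
  have hl1 : 1 ≤ l := hl.pos
  haveI : Nonempty (Fin m ⊕ Fin l) := ⟨Sum.inl ⟨0, hm1⟩⟩
  apply max_le
  · refine core (p := fun v => v.isLeft) ?_ ?_ ⟨Sum.inr ⟨0, hl1⟩, rfl⟩
    · intro u v
      rcases u with u | u <;> rcases v with v | v <;>
        simp [completeBipartiteGraph]
    · have e : {x : Fin m ⊕ Fin l | x.isLeft = true} ≃ Fin m :=
        { toFun := fun x => x.1.getLeft x.2
          invFun := fun a => ⟨Sum.inl a, rfl⟩
          left_inv := by rintro ⟨x | x, h⟩ <;> simp_all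
          right_inv := fun a => rfl }
      rw [← Nat.card_coe_set_eq]
      exact (Nat.card_congr e).trans (by simp)
  · refine core (p := fun v => v.isRight) ?_ ?_ ⟨Sum.inl ⟨0, hm1⟩, rfl⟩
    · intro u v
      rcases u with u | u <;> rcases v with v | v <;>
        simp [completeBipartiteGraph]
    · have e : {x : Fin m ⊕ Fin l | x.isRight = true} ≃ Fin l :=
        { toFun := fun x => x.1.getRight x.2
          invFun := fun a => ⟨Sum.inr a, rfl⟩
          left_inv := by rintro ⟨x | x, h⟩ <;> simp_all
          right_inv := fun a => rfl }
      rw [← Nat.card_coe_set_eq]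
      exact (Nat.card_congr e).trans (by simp)

end SymPaper
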